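/- arXiv:1404.3494 — 6 statements merged into one kernel-verified Lean document; each statement's English description precedes it below -/
import Mathlib

section
/- Let R be a commutative ring with identity and let F be a polynomial in one variable over R. Then there exists a sequence of multivariate polynomials (f_m)_{m≥0}, with f_m ∈ R[x_1,…,x_m], such that f_0 = 1, f_1(x_1) = F(x_1), and for every m ≥ 1 the polynomial identity F(∑_{k=1}^m x_k · f_{k-1}(x_1,…,x_{k-1})) = f_{m-1}(x_1,…,x_{m-1}) · f_m(x_1,…,x_m) holds in R[x_1,…,x_m]. -/
/-!
Let `G(a, t)` be the difference quotient of `F`, so that `F(a + t) = F(a) + t · G(a, t)`.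
Put `s_m = ∑_{k<m} x_k f_k` and suppose `F(s_m) = f_{m-1} f_m`. Since `s_{m+1} = s_m + x_m f_m`,
`F(s_{m+1}) = f_{m-1} f_m + x_m f_m · G(s_m, x_m f_m) = f_m · (f_{m-1} + x_m G(s_m, x_m f_m))`,
so the recursion `f_{m+1} = f_{m-1} + x_m G(s_m, x_m f_m)` keeps the identity going. Started from
`f_{-1} = F(0)` and `f_0 = 1`, it gives `f_1 = F(0) + x_0 G(0, x_0) = F(x_0)`, and `f_m` only involves
`x_0, …, x_{m-1}`.
-/

open Polynomial

theorem MvPolynomial.aeval_mem_adjoin_range {R A σ : Type*} [CommSemiring R] [CommSemiring A]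
    [Algebra R A] (x : σ → A) (p : MvPolynomial σ R) :
    aeval x p ∈ Algebra.adjoin R (Set.range x) :=
  MvPolynomial.aeval_range (R := R) x ▸ AlgHom.mem_range_self _ p

theorem Polynomial.exists_aeval_add_eq_aeval_add_mul {R : Type*} [CommRing R] (F : R[X]) :
    ∃ G : MvPolynomial (Fin 2) R, ∀ {A : Type*} [CommSemiring A] [Algebra R A] (a t : A),
      aeval (a + t) F = aeval a F + t * MvPolynomial.aeval ![a, t] G := by
  set X₀ : MvPolynomial (Fin 2) R := MvPolynomial.X 0
  set X₁ : MvPolynomial (Fin 2) R := MvPolynomial.X 1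
  have hdvd := sub_dvd_eval_sub (X₀ + X₁) X₀ (F.map (algebraMap R _))
  rw [add_sub_cancel_left, eval_map_algebraMap, eval_map_algebraMap] at hdvd
  obtain ⟨G, hG⟩ := hdvd
  refine ⟨G, fun a t ↦ ?_⟩
  have hG' := congrArg (MvPolynomial.aeval ![a, t]) (eq_add_of_sub_eq' hG)
  simpa only [map_add, map_mul, ← aeval_algHom_apply, MvPolynomial.aeval_X, X₀, X₁,
    Matrix.cons_val_zero, Matrix.cons_val_one] using hG'

section FactorChain

variable {R A : Type*} [CommSemiring R] [CommSemiring A] [Algebra R A]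
  (F : R[X]) (G : MvPolynomial (Fin 2) R) (x : ℕ → A)

/-- The triples `(s_m, f_{m-1}, f_m)`, with the convention `f_{-1} = F(0)`. -/
noncomputable def factorChain : ℕ → A × A × A
  | 0 => (0, aeval 0 F, 1)
  | m + 1 =>
    let c := factorChain m
    (c.1 + x m * c.2.2, c.2.2, c.2.1 + x m * MvPolynomial.aeval ![c.1, x m * c.2.2] G)

theorem factorChain_fst (m : ℕ) :
    (factorChain F G x m).1 = ∑ k ∈ Finset.range m, x k * (factorChain F G x k).2.2 := by
  induction m with
  | zero => rfl
  | succ m ih => rw [Finset.sum_range_succ, ← ih]; rfl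

theorem factorChain_succ_snd (m : ℕ) :
    (factorChain F G x (m + 1)).2.1 = (factorChain F G x m).2.2 := rfl

theorem aeval_factorChain_fst
    (hG : ∀ a t : A, aeval (a + t) F = aeval a F + t * MvPolynomial.aeval ![a, t] G) (m : ℕ) :
    aeval (factorChain F G x m).1 F = (factorChain F G x m).2.1 * (factorChain F G x m).2.2 := by
  induction m with
  | zero => simp [factorChain]
  | succ m ih =>
    change aeval (_ + _) F = _
    rw [hG, ih]
    simp only [factorChain]
    ring

theorem factorChain_mem_adjoin (m : ℕ) :
    (factorChain F G x m).1 ∈ Algebra.adjoin R (x '' {i | i < m}) ∧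
      (factorChain F G x m).2.1 ∈ Algebra.adjoin R (x '' {i | i < m}) ∧
      (factorChain F G x m).2.2 ∈ Algebra.adjoin R (x '' {i | i < m}) := by
  induction m with
  | zero =>
    refine ⟨zero_mem _, ?_, one_mem _⟩
    change aeval 0 F ∈ _
    exact coeff_zero_eq_aeval_zero' (A := A) F ▸ Subalgebra.algebraMap_mem _ _
  | succ m ih =>
    obtain ⟨hs, hp, hq⟩ := ih
    have hmono : Algebra.adjoin R (x '' {i | i < m}) ≤ Algebra.adjoin R (x '' {i | i < m + 1}) :=
      Algebra.adjoin_mono (Set.image_mono fun i hi ↦ Nat.lt_succ_of_lt hi)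
    have hx : x m ∈ Algebra.adjoin R (x '' {i | i < m + 1}) :=
      Algebra.subset_adjoin ⟨m, Nat.lt_succ_self m, rfl⟩
    have hxq := mul_mem hx (hmono hq)
    have hquot : MvPolynomial.aeval ![(factorChain F G x m).1, x m * (factorChain F G x m).2.2] G
        ∈ Algebra.adjoin R (x '' {i | i < m + 1}) := by
      refine Algebra.adjoin_le ?_ (MvPolynomial.aeval_mem_adjoin_range _ G)
      rintro _ ⟨i, rfl⟩
      fin_cases i
      exacts [hmono hs, hxq]
    exact ⟨add_mem (hmono hs) hxq, hmono hq, add_mem (hmono hp) (mul_mem hx hquot)⟩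

end FactorChain

/-- Let `R` be a commutative ring with identity and let `F` be a
polynomial in one variable over `R`. There exists a sequence of multivariate
polynomials `(f m)`, with `f m` using only the variables `x_1, …, x_m`
(here indexed `0, …, m-1`), such that `f 0 = 1`, `f 1 = F(x_1)`, and for every
`m ≥ 1`, `F (∑_{k=1}^m x_k · f_{k-1}) = f_{m-1} · f_m` in `R[x_1,…,x_m]`. -/
theorem stmt_0 (R : Type*) [CommRing R] (F : Polynomial R) :
    ∃ f : ℕ → MvPolynomial ℕ R,
      (∀ m : ℕ, f m ∈ MvPolynomial.supported R {i : ℕ | i < m}) ∧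
      f 0 = 1 ∧
      f 1 = Polynomial.aeval (MvPolynomial.X 0) F ∧
      ∀ m : ℕ, 1 ≤ m →
        Polynomial.aeval (∑ k ∈ Finset.range m, MvPolynomial.X k * f k) F
          = f (m - 1) * f m := by
  obtain ⟨G, hG⟩ := F.exists_aeval_add_eq_aeval_add_mul
  set c := factorChain F G (MvPolynomial.X : ℕ → MvPolynomial ℕ R)
  refine ⟨fun m ↦ (c m).2.2, fun m ↦ (factorChain_mem_adjoin F G _ m).2.2, rfl, ?_, ?_⟩
  · change aeval 0 F + MvPolynomial.X 0 * MvPolynomial.aeval ![0, MvPolynomial.X 0 * 1] G = _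
    rw [mul_one, ← hG, zero_add]
  · intro m hm
    obtain ⟨n, rfl⟩ : ∃ n, m = n + 1 := ⟨m - 1, by omega⟩
    rw [← factorChain_fst, aeval_factorChain_fst F G _ hG, factorChain_succ_snd]
    rfl
end

section
/- Let R be a commutative ring with identity, a, b, c ∈ R, and F(z) = a z² + b z + c. Define multivariate polynomials f_0 = 1, f_1(x_1) = F(x_1) = a x_1² + b x_1 + c, and for m ≥ 2, f_m = f_{m-2} + x_m · (∂f_{m-1}/∂x_{m-1}) + a · x_m² · f_{m-1} in R[x_1,…,x_m]. Then for every m ≥ 1, F(∑_{k=1}^m x_k · f_{k-1}(x_1,…,x_{k-1})) = f_{m-1} · f_m as an identity in R[x_1,…,x_m]. -/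
/-!
Write `S m = ∑_{k<m} x_{k+1} f_k`, so that `S (m+1) = S m + x_{m+1} f_m`. By induction, `f_m`
involves only `x_1, …, x_m`, and `∂f_m/∂x_m = F'(S m) = 2a S m + b`: differentiating the
recursion in `x_m` gives `∂f_{m-1}/∂x_{m-1} + 2a x_m f_{m-1}`, because partial derivatives
commute and `f_{m-2}`, `f_{m-1}` do not involve `x_m`. Then the Taylor expansion
`F(S m + x_{m+1} f_m) = F(S m) + x_{m+1} f_m F'(S m) + a x_{m+1}² f_m²`
turns `F(S m) = f_{m-1} f_m` into `F(S (m+1)) = f_m f_{m+1}`.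
-/

open MvPolynomial

theorem MvPolynomial.pderiv_pderiv_comm {σ R : Type*} [CommSemiring R] (i j : σ)
    (p : MvPolynomial σ R) : pderiv i (pderiv j p) = pderiv j (pderiv i p) := by
  induction p using MvPolynomial.induction_on with
  | C a => simp
  | add p q hp hq => simp [hp, hq]
  | mul_X p n hp =>
    simp only [pderiv_mul, map_add, hp]
    by_cases hi : n = i <;> by_cases hj : n = j <;>
      subst_vars <;> simp_all [pderiv_X_self, pderiv_X_of_ne]

/-- The recursion defining `f`, with `X k` standing for `x_{k+1}`. -/
structure IsQuadraticRecursion {R : Type*} [CommRing R] (a b c : R)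
    (f : ℕ → MvPolynomial ℕ R) : Prop where
  zero : f 0 = 1
  one : f 1 = C a * X 0 ^ 2 + C b * X 0 + C c
  add_two : ∀ m, f (m + 2) = f m + X (m + 1) * pderiv m (f (m + 1))
    + C a * X (m + 1) ^ 2 * f (m + 1)

namespace IsQuadraticRecursion

variable {R : Type*} [CommRing R] {a b c : R} {f : ℕ → MvPolynomial ℕ R}

theorem pderiv_eq_zero_of_le (hf : IsQuadraticRecursion a b c f) {m i : ℕ} (hmi : m ≤ i) :
    pderiv i (f m) = 0 := by
  induction m using Nat.twoStepInduction with
  | zero => simp [hf.zero]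
  | one => simp [hf.one, pderiv_X_of_ne (show 0 ≠ i by omega)]
  | more m ihm ihm1 =>
    have hd : pderiv i (pderiv m (f (m + 1))) = 0 := by
      rw [pderiv_pderiv_comm, ihm1 (by omega), map_zero]
    simp [hf.add_two, pderiv_X_of_ne (show m + 1 ≠ i by omega), ihm (by omega),
      ihm1 (by omega), hd]

theorem pderiv_succ_eq_two_mul_sum_add (hf : IsQuadraticRecursion a b c f) (m : ℕ) :
    pderiv m (f (m + 1)) = 2 * C a * (∑ k ∈ Finset.range (m + 1), X k * f k) + C b := by
  induction m with
  | zero =>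
    simp [hf.one, hf.zero]
    ring
  | succ m ih =>
    have hd : pderiv (m + 1) (pderiv m (f (m + 1))) = 0 := by
      rw [pderiv_pderiv_comm, hf.pderiv_eq_zero_of_le le_rfl, map_zero]
    rw [hf.add_two, Finset.sum_range_succ]
    simp only [map_add, pderiv_mul, pderiv_pow, pderiv_C, pderiv_X_self, hd,
      hf.pderiv_eq_zero_of_le m.le_succ, hf.pderiv_eq_zero_of_le (le_refl (m + 1))]
    linear_combination ih

theorem quadratic_sum_eq_mul_succ (hf : IsQuadraticRecursion a b c f) (m : ℕ) :
    C a * (∑ k ∈ Finset.range (m + 1), X k * f k) ^ 2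
        + C b * (∑ k ∈ Finset.range (m + 1), X k * f k) + C c = f m * f (m + 1) := by
  induction m with
  | zero => simp [hf.zero, hf.one]
  | succ m ih =>
    rw [Finset.sum_range_succ, hf.add_two, hf.pderiv_succ_eq_two_mul_sum_add m]
    linear_combination ih

end IsQuadraticRecursion

open MvPolynomial in
/-- Let `R` be a commutative ring, `a b c ∈ R`, and
`F(z) = a z² + b z + c`.  Define `f 0 = 1`, `f 1 = F(x_1)`, and for `m ≥ 2`
`f m = f (m-2) + x_m · ∂f_{m-1}/∂x_{m-1} + a · x_m² · f_{m-1}`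
(variables `x_j` are indexed by `j - 1`).  Then for every `m ≥ 1`,
`F (∑_{k=1}^m x_k · f_{k-1}) = f_{m-1} · f_m` in `R[x_1,…,x_m]`. -/
theorem stmt_1 (R : Type*) [CommRing R] (a b c : R) (f : ℕ → MvPolynomial ℕ R)
    (h0 : f 0 = 1)
    (h1 : f 1 = C a * X 0 ^ 2 + C b * X 0 + C c)
    (hrec : ∀ m : ℕ, 2 ≤ m →
      f m = f (m - 2) + X (m - 1) * (pderiv (m - 2) (f (m - 1)))
              + C a * X (m - 1) ^ 2 * f (m - 1)) :
    ∀ m : ℕ, 1 ≤ m →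
      C a * (∑ k ∈ Finset.range m, X k * f k) ^ 2
          + C b * (∑ k ∈ Finset.range m, X k * f k) + C c
        = f (m - 1) * f m := by
  intro m hm
  obtain ⟨n, rfl⟩ := Nat.exists_eq_add_of_le' hm
  exact IsQuadraticRecursion.quadratic_sum_eq_mul_succ ⟨h0, h1, fun m => hrec (m + 2) (by omega)⟩ n
end

section
/- Let F be a recursively-factorable polynomial with integer coefficients. Then for every n ∈ ℤ and every natural number p with p ∣ F(n), there exist m ≥ 1, integers x_1,…,x_m, and integers g_0, g_1,…,g_m with g_0 = 1, such that for every k with 1 ≤ k ≤ m, F(∑_{j=1}^k x_j · g_{j-1}) = g_{k-1} · g_k, and moreover n = ∑_{j=1}^m x_j · g_{j-1} and p = |g_m|. -/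
/-!
Induct on `|F(n)|` and write `F(n) = d·e`. If `d` or `e` is a unit, the one-step chain
`x₁ = n`, `g₁ = F(n)` (followed by `x₂ = 0`, `g₂ = 1` when `d` is the unit) does it. Otherwise
recursive factorability gives `r` with `|F(r)| < |F(n)|` and `c ∣ r - n` for `c = d` or `c = e`;
as `r - n ∣ F(r) - F(n)`, also `c ∣ F(r)`, so by induction a chain reaches `r` with last value `±c`.
The step `x = (n - r)/(±c)` extends it to `n` with last value `F(n)/(±c)`, which is `±d` when
`c = e`; when `c = d` it is `±e`, and one more step with `x = 0` brings the last value back to `±d`.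
-/

/-- A polynomial `F` with integer coefficients is *recursively-factorable* if for every
`n ∈ ℤ` and all integers `p, q` with `F(n) = p·q`, `|p| ≠ 1` and `|q| ≠ 1`, there exists
`r ∈ ℤ` with `|F(r)| < |F(n)|` and `r ≡ n (mod |p|)` or `r ≡ n (mod |q|)` (congruence
mod 0 meaning equality, which is exactly divisibility of `r - n` by `p` resp. `q`). -/
def RecursivelyFactorable (F : Polynomial ℤ) : Prop :=
  ∀ n p q : ℤ, F.eval n = p * q → |p| ≠ 1 → |q| ≠ 1 →
    ∃ r : ℤ, |F.eval r| < |F.eval n| ∧ (p ∣ (r - n) ∨ q ∣ (r - n))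

open Polynomial Finset

lemma Polynomial.dvd_eval_of_dvd_sub {R : Type*} [CommRing R] (F : R[X]) {d a b : R}
    (hab : d ∣ a - b) (hb : d ∣ F.eval b) : d ∣ F.eval a :=
  (dvd_sub_left hb).mp (hab.trans (sub_dvd_eval_sub a b F))

def HasSieveChain (F : ℤ[X]) (n d : ℤ) : Prop :=
  ∃ (m : ℕ) (x g : ℕ → ℤ), 1 ≤ m ∧ g 0 = 1 ∧
    (∀ k : ℕ, 1 ≤ k → k ≤ m →
      F.eval (∑ j ∈ range k, x (j + 1) * g j) = g (k - 1) * g k) ∧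
    n = ∑ j ∈ range m, x (j + 1) * g j ∧ g m = d

namespace HasSieveChain

lemma eval_self (F : ℤ[X]) (n : ℤ) : HasSieveChain F n (F.eval n) := by
  refine ⟨1, fun _ => n, fun j => if j = 0 then 1 else F.eval n, le_rfl, rfl,
    fun k hk1 hk2 => ?_, by simp, rfl⟩
  obtain rfl : k = 1 := by omega
  simp

variable {F : ℤ[X]}

lemma extend {n d : ℤ} (h : HasSieveChain F n d) (v w : ℤ)
    (hw : F.eval (n + v * d) = d * w) : HasSieveChain F (n + v * d) w := by
  obtain ⟨m, x, g, -, hg0, hchain, rfl, rfl⟩ := h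
  set x' := Function.update x (m + 1) v
  set g' := Function.update g (m + 1) w
  have hx' : ∀ j ≤ m, x' j = x j := fun j hj => Function.update_of_ne (by omega) _ _
  have hg' : ∀ j ≤ m, g' j = g j := fun j hj => Function.update_of_ne (by omega) _ _
  have hxm : x' (m + 1) = v := Function.update_self ..
  have hgm : g' (m + 1) = w := Function.update_self ..
  have hsum : ∀ k ≤ m, ∑ j ∈ range k, x' (j + 1) * g' j = ∑ j ∈ range k, x (j + 1) * g j :=
    fun k hk => sum_congr rfl fun j hj => by
      rw [mem_range] at hj
      rw [hx' _ (by omega), hg' _ (by omega)]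
  have hsum_succ : ∑ j ∈ range (m + 1), x' (j + 1) * g' j
      = ∑ j ∈ range m, x (j + 1) * g j + v * g m := by
    rw [sum_range_succ, hsum m le_rfl, hg' m le_rfl, hxm]
  refine ⟨m + 1, x', g', by omega, by rw [hg' 0 m.zero_le, hg0], fun k hk1 hk2 => ?_,
    hsum_succ.symm, hgm⟩
  rcases Nat.lt_or_ge k (m + 1) with hk | hk
  · rw [hsum k (by omega), hg' _ (by omega), hg' _ (by omega)]
    exact hchain k hk1 (by omega)
  · obtain rfl : k = m + 1 := by omega
    rw [hsum_succ, Nat.add_sub_cancel, hg' m le_rfl, hgm]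
    exact hw

lemma step {r g n w : ℤ} (h : HasSieveChain F r g) (hg : g ∣ n - r)
    (hw : F.eval n = g * w) : HasSieveChain F n w := by
  obtain ⟨v, hv⟩ := hg
  obtain rfl : n = r + v * g := by linarith
  exact h.extend v w hw

lemma cofactor {n g w : ℤ} (h : HasSieveChain F n g) (hw : F.eval n = g * w) :
    HasSieveChain F n w :=
  h.step (by simp) hw

end HasSieveChain

theorem RecursivelyFactorable.exists_hasSieveChain {F : ℤ[X]} (hF : RecursivelyFactorable F)
    (n d : ℤ) (hd : d ∣ F.eval n) : ∃ g, HasSieveChain F n g ∧ |g| = |d| := by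
  obtain ⟨e, hde⟩ := hd
  by_cases hd1 : |d| = 1
  · exact ⟨1, (HasSieveChain.eval_self F n).cofactor (mul_one _).symm, by rw [hd1, abs_one]⟩
  by_cases he1 : |e| = 1
  · exact ⟨_, HasSieveChain.eval_self F n, by rw [hde, abs_mul, he1, mul_one]⟩
  obtain ⟨r, hlt, hr⟩ := hF n d e hde hd1 he1
  have hdecr : (F.eval r).natAbs < (F.eval n).natAbs := by zify; exact hlt
  rcases hr with hdr | her
  · obtain ⟨g, hg, hgd⟩ :=
      hF.exists_hasSieveChain r d (F.dvd_eval_of_dvd_sub hdr ⟨e, hde⟩)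
    have hgd' : g ∣ d := (abs_dvd_abs _ _).mp (hgd ▸ dvd_rfl)
    obtain ⟨w, hw⟩ : g ∣ F.eval n := hgd'.trans ⟨e, hde⟩
    have hn : HasSieveChain F n w := hg.step (dvd_sub_comm.mp (hgd'.trans hdr)) hw
    exact ⟨g, hn.cofactor (by rw [hw, mul_comm]), hgd⟩
  · have her' : e ∣ n - r := dvd_sub_comm.mp her
    obtain ⟨g, hg, hge⟩ :=
      hF.exists_hasSieveChain r e (F.dvd_eval_of_dvd_sub her ⟨d, by rw [hde, mul_comm]⟩)
    rcases abs_eq_abs.mp hge with rfl | rfl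
    · exact ⟨d, hg.step her' (by rw [hde, mul_comm]), rfl⟩
    · exact ⟨-d, hg.step (neg_dvd.mpr her') (by rw [hde]; ring), abs_neg d⟩
termination_by (F.eval n).natAbs

/-- If `F` is recursively-factorable, then for every `n ∈ ℤ` and every
natural `p` with `p ∣ F(n)` there are `m ≥ 1`, integers `x_1, …, x_m` (here `x (j+1)` is
`x_{j+1}`) and integers `g_0 = 1, g_1, …, g_m` such that for each `1 ≤ k ≤ m`,
`F(∑_{j=1}^k x_j · g_{j-1}) = g_{k-1} · g_k`, with `n = ∑_{j=1}^m x_j · g_{j-1}` and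
`p = |g_m|`. -/
theorem stmt_4 (F : Polynomial ℤ) (hF : RecursivelyFactorable F)
    (n : ℤ) (p : ℕ) (hp : (p : ℤ) ∣ F.eval n) :
    ∃ (m : ℕ) (x g : ℕ → ℤ), 1 ≤ m ∧ g 0 = 1 ∧
      (∀ k : ℕ, 1 ≤ k → k ≤ m →
        F.eval (∑ j ∈ Finset.range k, x (j + 1) * g j) = g (k - 1) * g k) ∧
      n = ∑ j ∈ Finset.range m, x (j + 1) * g j ∧
      (p : ℤ) = |g m| := by
  obtain ⟨_, ⟨m, x, g, hm, hg0, hchain, hn, rfl⟩, hgp⟩ := hF.exists_hasSieveChain n p hp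
  exact ⟨m, x, g, hm, hg0, hchain, hn, by rw [hgp, Nat.abs_cast]⟩
end

section
/- Let a, b, c, α, β, γ, δ ∈ ℤ and F(x) = a x² + b x + c. Set η = α γ + b β γ + c β δ, Δ = α δ − a β γ, φ₀ = α² + b α β + a c β², and φ₁ = a γ² + b γ δ + c δ². Then F(η) = φ₀ · φ₁ if and only if Δ = 1 or c·(Δ + 1) + b·η = 0. Equivalently, the polynomial identity F(η) − φ₀ φ₁ = (1 − Δ)·(c Δ + c + b η) holds. -/
theorem quadratic_eval_sub_mul_eq {R : Type*} [CommRing R] (a b c α β γ δ : R) :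
    (a * (α * γ + b * β * γ + c * β * δ) ^ 2 + b * (α * γ + b * β * γ + c * β * δ) + c)
        - (α ^ 2 + b * α * β + a * c * β ^ 2) * (a * γ ^ 2 + b * γ * δ + c * δ ^ 2)
      = (1 - (α * δ - a * β * γ)) *
          (c * (α * δ - a * β * γ) + c + b * (α * γ + b * β * γ + c * β * δ)) := by
  ring

theorem eq_iff_of_sub_eq_one_sub_mul {R : Type*} [CommRing R] [NoZeroDivisors R]
    {x y d e : R} (h : x - y = (1 - d) * e) : x = y ↔ d = 1 ∨ e = 0 := by
  rw [← sub_eq_zero, h, mul_eq_zero, sub_eq_zero, eq_comm]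

/-- For integers `a b c α β γ δ` and `F(x) = a x² + b x + c`, with
`η = αγ + bβγ + cβδ`, `Δ = αδ − aβγ`, `φ₀ = α² + bαβ + acβ²`, `φ₁ = aγ² + bγδ + cδ²`:
`F(η) = φ₀ · φ₁` if and only if `Δ = 1` or `c(Δ + 1) + bη = 0`; equivalently, the
identity `F(η) − φ₀φ₁ = (1 − Δ)(cΔ + c + bη)` holds. -/
theorem stmt_12 (a b c α β γ δ : ℤ) :
    (a * (α * γ + b * β * γ + c * β * δ) ^ 2 + b * (α * γ + b * β * γ + c * β * δ) + c
        = (α ^ 2 + b * α * β + a * c * β ^ 2) * (a * γ ^ 2 + b * γ * δ + c * δ ^ 2)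
      ↔ (α * δ - a * β * γ = 1 ∨
          c * ((α * δ - a * β * γ) + 1) + b * (α * γ + b * β * γ + c * β * δ) = 0)) ∧
    (a * (α * γ + b * β * γ + c * β * δ) ^ 2 + b * (α * γ + b * β * γ + c * β * δ) + c)
        - (α ^ 2 + b * α * β + a * c * β ^ 2) * (a * γ ^ 2 + b * γ * δ + c * δ ^ 2)
      = (1 - (α * δ - a * β * γ)) *
          (c * (α * δ - a * β * γ) + c + b * (α * γ + b * β * γ + c * β * δ)) := by
  have key := quadratic_eval_sub_mul_eq a b c α β γ δ
  rw [mul_add_one]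
  exact ⟨eq_iff_of_sub_eq_one_sub_mul key, key⟩
end

section
/- Let a, b, c ∈ ℤ, F(n) = a n² + b n + c, and let x_1,…,x_m be integers. Define 2×2 integer matrices A_0 = I (the identity matrix) and, for 0 ≤ k ≤ m−1, A_{k+1} = A_k + x_{k+1}·B_k, where, writing A_k = ((α_k, β_k),(γ_k, δ_k)), B_k = ((a γ_k, δ_k),(0, 0)) if k is odd and B_k = ((0, 0),(α_k, a β_k)) if k is even. For a matrix A = ((α, β),(γ, δ)) set Δ[A] = αδ − aβγ, φ₀[A] = α² + bαβ + acβ², φ₁[A] = aγ² + bγδ + cδ², and φ_k[A] = φ₀[A] for even k, φ₁[A] for odd k. Then: (1) Δ[A_m] = 1 for every m; and (2) F(∑_{k=1}^m x_k · φ_{k-1}[A_{k-1}]) = φ_{m-1}[A_{m-1}] · φ_m[A_m]. -/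
/-! `Δ[A]` is the determinant of `((α, aβ), (γ, δ))`, and every step is a row shear of that
matrix, so `Δ` stays `1`. Put `S[A] = αγ + bβγ + cβδ`. For `Δ[A] = 1` one has the composition
identity `F(S[A]) = φ₀[A] φ₁[A]`, and each step adds `x_{k+1} φ_k[A_k]` to `S`, so `S[A_m]` is
the sum in the statement. A step changes only the row that `φ_k` does not see, hence
`φ_{m-1}[A_{m-1}] φ_m[A_m] = φ₀[A_m] φ₁[A_m]`. -/

section SieveMatrix

variable (a b c : ℤ)

def φ₀ (α β : ℤ) : ℤ := α ^ 2 + b * α * β + a * c * β ^ 2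

def φ₁ (γ δ : ℤ) : ℤ := a * γ ^ 2 + b * γ * δ + c * δ ^ 2

def crossTerm (α β γ δ : ℤ) : ℤ := α * γ + b * β * γ + c * β * δ

variable {a b c}

theorem quadratic_crossTerm_eq_φ₀_mul_φ₁ {α β γ δ : ℤ} (hΔ : α * δ - a * β * γ = 1) :
    a * crossTerm b c α β γ δ ^ 2 + b * crossTerm b c α β γ δ + c
      = φ₀ a b c α β * φ₁ a b c γ δ := by
  unfold crossTerm φ₀ φ₁
  linear_combination
    -(b * (α * γ + b * β * γ + c * β * δ) + c * (α * δ - a * β * γ + 1)) * hΔ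

theorem sieveStep_lowerRow {α β γ δ α' β' γ' δ' t : ℤ}
    (h : α' = α ∧ β' = β ∧ γ' = γ + t * α ∧ δ' = δ + t * (a * β)) :
    α' * δ' - a * β' * γ' = α * δ - a * β * γ ∧
      crossTerm b c α' β' γ' δ' = crossTerm b c α β γ δ + t * φ₀ a b c α β ∧
      φ₀ a b c α β * φ₁ a b c γ' δ' = φ₀ a b c α' β' * φ₁ a b c γ' δ' := by
  obtain ⟨rfl, rfl, rfl, rfl⟩ := h
  refine ⟨by ring, by unfold crossTerm φ₀; ring, rfl⟩

theorem sieveStep_upperRow {α β γ δ α' β' γ' δ' t : ℤ}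
    (h : α' = α + t * (a * γ) ∧ β' = β + t * δ ∧ γ' = γ ∧ δ' = δ) :
    α' * δ' - a * β' * γ' = α * δ - a * β * γ ∧
      crossTerm b c α' β' γ' δ' = crossTerm b c α β γ δ + t * φ₁ a b c γ δ ∧
      φ₁ a b c γ δ * φ₀ a b c α' β' = φ₀ a b c α' β' * φ₁ a b c γ' δ' := by
  obtain ⟨rfl, rfl, rfl, rfl⟩ := h
  refine ⟨by ring, by unfold crossTerm φ₁; ring, mul_comm _ _⟩

end SieveMatrix

/-- Let `F(n) = a n² + b n + c` and `x_1, …, x_m ∈ ℤ` (here `x (k+1)`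
is `x_{k+1}`).  Let `A_k = ((α k, β k), (γ k, δ k))` be defined by `A_0 = I` and
`A_{k+1} = A_k + x_{k+1} · B_k`, where `B_k = ((a γ_k, δ_k), (0, 0))` for odd `k` and
`B_k = ((0, 0), (α_k, a β_k))` for even `k`.  With `Δ[A] = αδ − aβγ` and
`φ k = φ₀[A_k] = α_k² + bα_kβ_k + acβ_k²` for even `k`,
`φ k = φ₁[A_k] = aγ_k² + bγ_kδ_k + cδ_k²` for odd `k`, we have:
(1) `Δ[A_m] = 1` for every `m`; and
(2) for every `m ≥ 1`, `F(∑_{k=1}^m x_k · φ_{k-1}[A_{k-1}]) = φ_{m-1}[A_{m-1}] · φ_m[A_m]`. -/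
theorem stmt_14 (a b c : ℤ) (x : ℕ → ℤ) (α β γ δ : ℕ → ℤ)
    (hα0 : α 0 = 1) (hβ0 : β 0 = 0) (hγ0 : γ 0 = 0) (hδ0 : δ 0 = 1)
    (hodd : ∀ k : ℕ, Odd k →
      α (k + 1) = α k + x (k + 1) * (a * γ k) ∧
      β (k + 1) = β k + x (k + 1) * δ k ∧
      γ (k + 1) = γ k ∧ δ (k + 1) = δ k)
    (heven : ∀ k : ℕ, Even k →
      α (k + 1) = α k ∧ β (k + 1) = β k ∧
      γ (k + 1) = γ k + x (k + 1) * α k ∧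
      δ (k + 1) = δ k + x (k + 1) * (a * β k))
    (φ : ℕ → ℤ)
    (hφ : ∀ k : ℕ, φ k = if Even k
      then (α k) ^ 2 + b * (α k) * (β k) + a * c * (β k) ^ 2
      else a * (γ k) ^ 2 + b * (γ k) * (δ k) + c * (δ k) ^ 2) :
    (∀ m : ℕ, α m * δ m - a * β m * γ m = 1) ∧
    (∀ m : ℕ, 1 ≤ m →
      a * (∑ k ∈ Finset.range m, x (k + 1) * φ k) ^ 2
          + b * (∑ k ∈ Finset.range m, x (k + 1) * φ k) + c
        = φ (m - 1) * φ m) := by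
  set S := fun k => crossTerm b c (α k) (β k) (γ k) (δ k)
  have step : ∀ k,
      α (k + 1) * δ (k + 1) - a * β (k + 1) * γ (k + 1) = α k * δ k - a * β k * γ k ∧
      S (k + 1) = S k + x (k + 1) * φ k ∧
      φ k * φ (k + 1)
        = φ₀ a b c (α (k + 1)) (β (k + 1)) * φ₁ a b c (γ (k + 1)) (δ (k + 1)) := by
    intro k
    rcases Nat.even_or_odd k with hk | hk
    · rw [hφ k, hφ (k + 1), if_pos hk, if_neg (by simpa [Nat.even_add_one] using hk)]
      exact sieveStep_lowerRow (heven k hk)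
    · rw [hφ k, hφ (k + 1), if_neg (Nat.not_even_iff_odd.mpr hk), if_pos hk.add_one]
      exact sieveStep_upperRow (hodd k hk)
  have hΔ : ∀ m, α m * δ m - a * β m * γ m = 1 := fun m => by
    induction m with
    | zero => simp [hα0, hβ0, hγ0, hδ0]
    | succ k ih => rw [(step k).1, ih]
  have hS : ∀ m, ∑ k ∈ Finset.range m, x (k + 1) * φ k = S m := fun m =>
    Finset.sum_range_induction _ S (by simp [S, crossTerm, hβ0, hγ0]) m fun k _ => (step k).2.1
  refine ⟨hΔ, fun m hm => ?_⟩
  obtain ⟨k, rfl⟩ := Nat.exists_eq_add_of_le' hm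
  rw [hS, Nat.add_sub_cancel, (step k).2.2]
  exact quadratic_crossTerm_eq_φ₀_mul_φ₁ (hΔ (k + 1))
end

section
/- Let a, b, c, n, X, Y ∈ ℤ with Y ≠ 0 and a X² + b X Y + c Y² + X − n Y = 0, and let G = gcd(X, Y) (taken positive). Then Y divides G·(1 + a X), and the integers α = G·(1 + a X)/Y, β = G, γ = X/G, δ = Y/G satisfy: (i) α δ − a β γ = 1; (ii) β γ = X and β δ = Y; and (iii) α γ + b β γ + c β δ = n. -/
/-!
Rewriting the conic as `X (1 + aX) = Y (n - bX - cY)` shows `Y ∣ X (1 + aX)`; since also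
`Y ∣ Y (1 + aX)`, `Y` divides `gcd(X, Y) (1 + aX)`. Then `α Y = G (1 + aX)` and `G γ = X`,
`G δ = Y`, and cancelling `Y` gives `α δ = 1 + aX` and `α γ = n - bX - cY`, from which
(i) and (iii) are linear consequences.
-/

theorem Int.dvd_gcd_mul_of_dvd_mul {X Y u : ℤ} (h : Y ∣ X * u) : Y ∣ (Int.gcd X Y : ℤ) * u := by
  rw [Int.gcd_comm, Int.coe_gcd]
  exact _root_.dvd_gcd_mul_of_dvd_mul h

/-- With `α = G u / Y` and `γ = X / G` read as exact quotients, `α γ = X u / Y`. -/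
theorem mul_eq_of_mul_eq_mul_of_mul_eq {R : Type*} [CommRing R] [IsDomain R]
    {α γ G u X Y k : R} (hY : Y ≠ 0) (hα : Y * α = G * u) (hγ : G * γ = X)
    (h : X * u = Y * k) : α * γ = k :=
  mul_left_cancel₀ hY <| by linear_combination γ * hα + u * hγ + h

/-- Let `(X, Y)` with `Y ≠ 0` be a lattice point of the conic
`a X² + b X Y + c Y² + X − n Y = 0`, and let `G = gcd(X, Y) > 0`.  Then
`Y ∣ G(1 + aX)` and the integers `α = G(1 + aX)/Y`, `β = G`, `γ = X/G`, `δ = Y/G`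
satisfy (i) `αδ − aβγ = 1`, (ii) `βγ = X`, `βδ = Y`, and (iii) `αγ + bβγ + cβδ = n`. -/
theorem stmt_18 (a b c n X Y : ℤ) (hY : Y ≠ 0)
    (hconic : a * X ^ 2 + b * X * Y + c * Y ^ 2 + X - n * Y = 0) :
    Y ∣ (Int.gcd X Y : ℤ) * (1 + a * X) ∧
    ((Int.gcd X Y : ℤ) * (1 + a * X) / Y) * (Y / (Int.gcd X Y : ℤ))
        - a * (Int.gcd X Y : ℤ) * (X / (Int.gcd X Y : ℤ)) = 1 ∧
    (Int.gcd X Y : ℤ) * (X / (Int.gcd X Y : ℤ)) = X ∧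
    (Int.gcd X Y : ℤ) * (Y / (Int.gcd X Y : ℤ)) = Y ∧
    ((Int.gcd X Y : ℤ) * (1 + a * X) / Y) * (X / (Int.gcd X Y : ℤ))
        + b * ((Int.gcd X Y : ℤ) * (X / (Int.gcd X Y : ℤ)))
        + c * ((Int.gcd X Y : ℤ) * (Y / (Int.gcd X Y : ℤ))) = n := by
  set G : ℤ := (Int.gcd X Y : ℤ)
  have hconic' : X * (1 + a * X) = Y * (n - b * X - c * Y) := by linear_combination hconic
  have hdvd : Y ∣ G * (1 + a * X) := Int.dvd_gcd_mul_of_dvd_mul ⟨_, hconic'⟩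
  have hα : Y * (G * (1 + a * X) / Y) = G * (1 + a * X) := Int.mul_ediv_cancel' hdvd
  have hγ : G * (X / G) = X := Int.mul_ediv_cancel' (Int.gcd_dvd_left X Y)
  have hδ : G * (Y / G) = Y := Int.mul_ediv_cancel' (Int.gcd_dvd_right X Y)
  have hαδ := mul_eq_of_mul_eq_mul_of_mul_eq hY hα hδ rfl
  have hαγ := mul_eq_of_mul_eq_mul_of_mul_eq hY hα hγ hconic'
  refine ⟨hdvd, ?_, hγ, hδ, ?_⟩
  · linear_combination hαδ - a * hγ
  · linear_combination hαγ + b * hγ + c * hδ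
end
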